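/- For all real a with 0 ≤ a ≤ 1, the function w ↦ v(w)^a + v(w)^{-a}, where v(w) = (w + √(w²-4))/2 is the larger solution of v + 1/v = w for w ≥ 2, is a Bernstein function of w on (2, ∞); i.e., it is nonnegative, smooth, and its derivative is completely monotone on (2,∞). -/

import Mathlib

open Real MeasureTheory Set Filter

/-- The larger solution `v ≥ 1` of `v + v⁻¹ = w`, for `w ≥ 2`. -/
noncomputable def vOf (w : ℝ) : ℝ := (w + Real.sqrt (w ^ 2 - 4)) / 2

noncomputable def phiB (a x : ℝ) : ℝ := x ^ a + x ^ (-a)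

noncomputable def CaB (a : ℝ) : ℝ := ∫ x in Ioi (0:ℝ), x ^ a / (x + 1) ^ 2

noncomputable def KkB (a : ℝ) (n : ℕ) (w : ℝ) : ℝ :=
  ∫ x in Ioi (1:ℝ), phiB a x * (x ^ n / (x ^ 2 + w * x + 1) ^ (n + 1))

noncomputable def MmB (a u : ℝ) : ℝ := ∫ x in Ioi (1:ℝ), phiB a x * ((x + u) ^ 2)⁻¹

noncomputable def FfB (a t : ℝ) : ℝ :=
  ∫ x in Ioi (1:ℝ), phiB a x * ((x + t⁻¹)⁻¹ - (x + t)⁻¹)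

/- ### Basic facts about vOf -/

lemma vOf_sq_pos {w : ℝ} (hw : 2 < w) : 0 < w ^ 2 - 4 := by nlinarith

lemma vOf_sqrt_pos {w : ℝ} (hw : 2 < w) : 0 < Real.sqrt (w ^ 2 - 4) :=
  Real.sqrt_pos.mpr (vOf_sq_pos hw)

lemma vOf_one_lt {w : ℝ} (hw : 2 < w) : 1 < vOf w := by
  have := vOf_sqrt_pos hw
  unfold vOf; linarith

lemma vOf_pos {w : ℝ} (hw : 2 < w) : 0 < vOf w := lt_trans one_pos (vOf_one_lt hw)

lemma vOf_inv {w : ℝ} (hw : 2 < w) : (vOf w)⁻¹ = (w - Real.sqrt (w ^ 2 - 4)) / 2 := by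
  have hs : Real.sqrt (w ^ 2 - 4) ^ 2 = w ^ 2 - 4 := Real.sq_sqrt (vOf_sq_pos hw).le
  have h0 : vOf w ≠ 0 := (vOf_pos hw).ne'
  field_simp [vOf] at *
  simp only [vOf]; nlinarith [hs]

lemma vOf_add_inv {w : ℝ} (hw : 2 < w) : vOf w + (vOf w)⁻¹ = w := by
  rw [vOf_inv hw]; unfold vOf; ring

lemma vOf_sub_inv {w : ℝ} (hw : 2 < w) : vOf w - (vOf w)⁻¹ = Real.sqrt (w ^ 2 - 4) := by
  rw [vOf_inv hw]; unfold vOf; ring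

/- ### phiB facts -/

lemma phiB_nonneg {a x : ℝ} (hx : 0 < x) : 0 ≤ phiB a x := by
  have h1 : (0:ℝ) ≤ x ^ a := Real.rpow_nonneg hx.le a
  have h2 : (0:ℝ) ≤ x ^ (-a) := Real.rpow_nonneg hx.le (-a)
  unfold phiB; linarith

lemma phiB_le {a x : ℝ} (ha : 0 ≤ a) (hx : 1 ≤ x) : phiB a x ≤ 2 * x ^ a := by
  have h2 : x ^ (-a) ≤ x ^ a := Real.rpow_le_rpow_of_exponent_le hx (by linarith)
  unfold phiB; linarith

lemma phiB_inv {a x : ℝ} (hx : 0 < x) : phiB a x⁻¹ = phiB a x := by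
  unfold phiB
  rw [Real.inv_rpow hx.le, Real.inv_rpow hx.le, ← Real.rpow_neg hx.le, ← Real.rpow_neg hx.le,
    neg_neg]
  ring

lemma continuousOn_phiB {a : ℝ} {s : Set ℝ} (hs : ∀ x ∈ s, 0 < x) :
    ContinuousOn (phiB a) s := fun x hx =>
  (((Real.continuousAt_rpow_const x a (Or.inl (hs x hx).ne')).add
    (Real.continuousAt_rpow_const x (-a) (Or.inl (hs x hx).ne'))).continuousWithinAt)

/- ### Integrability -/

lemma integrableOn_bound {a : ℝ} (ha1 : a < 1) (c : ℝ) :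
    IntegrableOn (fun x : ℝ => c * x ^ (a - 2)) (Ioi (1:ℝ)) := by
  exact (integrableOn_Ioi_rpow_of_lt (by linarith) one_pos).const_mul c

/-- Master integrability lemma on `Ioi 1`. -/
lemma integrableOn_phiB_mul {a : ℝ} (ha0 : 0 ≤ a) (ha1 : a < 1) {g : ℝ → ℝ} (c : ℝ)
    (hg : ContinuousOn g (Ioi 1)) (hbound : ∀ x ∈ Ioi (1:ℝ), |g x| ≤ c * (x ^ 2)⁻¹) :
    IntegrableOn (fun x => phiB a x * g x) (Ioi (1:ℝ)) := by
  refine Integrable.mono' (integrableOn_bound ha1 (2 * c)) ?_ ?_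
  · exact ((continuousOn_phiB (fun x hx => lt_trans one_pos hx)).mul hg).aestronglyMeasurable
      measurableSet_Ioi
  · refine (ae_restrict_mem measurableSet_Ioi).mono fun x hx => ?_
    have hx1 : (1:ℝ) < x := hx
    have h0 : (0:ℝ) < x := by linarith
    have hphi : 0 ≤ phiB a x := phiB_nonneg h0
    have h1 : |phiB a x * g x| = phiB a x * |g x| := by
      rw [abs_mul, abs_of_nonneg hphi]
    rw [Real.norm_eq_abs, h1]
    have h2 : phiB a x * |g x| ≤ (2 * x ^ a) * (c * (x ^ 2)⁻¹) := by
      apply mul_le_mul (phiB_le ha0 hx1.le) (hbound x hx) (abs_nonneg _) (by positivity)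
    refine h2.trans (le_of_eq ?_)
    have hx2 : (x ^ 2)⁻¹ = x ^ (-2 : ℝ) := by
      rw [← Real.rpow_natCast x 2, ← Real.rpow_neg h0.le]; norm_num
    rw [hx2]
    rw [show (2 * x ^ a) * (c * x ^ (-2:ℝ)) = 2 * c * (x ^ a * x ^ (-2:ℝ)) by ring,
      ← Real.rpow_add h0]
    ring_nf

/- ### The Beta integral evaluation -/

lemma CaB_eq_Ioo {a : ℝ} (ha0 : 0 < a) (ha1 : a < 1) :
    CaB a = ∫ t in Ioo (0:ℝ) 1, t ^ a * (1 - t) ^ (-a) := by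
  have hderiv : ∀ t ∈ Ioo (0:ℝ) 1, HasDerivWithinAt (fun t => t / (1 - t))
      (((1 - t) ^ 2)⁻¹) (Ioo (0:ℝ) 1) t := by
    intro t ht
    have h1 : (1:ℝ) - t ≠ 0 := by have := ht.2; intro h; linarith [sub_eq_zero.mp h]
    have hd := (hasDerivAt_id t).div ((hasDerivAt_const t (1:ℝ)).sub (hasDerivAt_id t)) h1
    have e : (1 * (1 - t) - t * (0 - 1)) / (1 - t) ^ 2 = ((1 - t) ^ 2)⁻¹ := by
      have : (1 * (1 - t) - t * (0 - 1)) = 1 := by ring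
      rw [this, one_div]
    simp only [id_eq] at hd
    rw [← e]
    exact hd.hasDerivWithinAt
  have hinj : InjOn (fun t : ℝ => t / (1 - t)) (Ioo (0:ℝ) 1) := by
    intro x hx y hy h
    have hx1 : (1:ℝ) - x ≠ 0 := by have := hx.2; intro hh; linarith [sub_eq_zero.mp hh]
    have hy1 : (1:ℝ) - y ≠ 0 := by have := hy.2; intro hh; linarith [sub_eq_zero.mp hh]
    field_simp at h
    nlinarith [h]
  have himg : (fun t : ℝ => t / (1 - t)) '' (Ioo (0:ℝ) 1) = Ioi 0 := by
    ext y
    constructor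
    · rintro ⟨t, ht, rfl⟩
      have h0 : (0:ℝ) < t := ht.1
      have h1 : (0:ℝ) < 1 - t := by linarith [ht.2]
      exact div_pos h0 h1
    · intro hy
      have hy0 : (0:ℝ) < y := hy
      refine ⟨y / (1 + y), ⟨by positivity, ?_⟩, ?_⟩
      · rw [div_lt_one (by linarith)]; linarith
      · field_simp
        ring
  have h := integral_image_eq_integral_abs_deriv_smul (f' := fun t : ℝ => ((1 - t) ^ 2)⁻¹)
    measurableSet_Ioo hderiv hinj (fun x => x ^ a / (x + 1) ^ 2)
  rw [himg] at h
  rw [CaB, h]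
  refine setIntegral_congr_fun measurableSet_Ioo fun t ht => ?_
  have ht0 : (0:ℝ) < t := ht.1
  have ht1 : (0:ℝ) < 1 - t := by linarith [ht.2]
  have e1 : (t / (1 - t)) ^ a = t ^ a / (1 - t) ^ a := Real.div_rpow ht0.le ht1.le a
  have e2 : t / (1 - t) + 1 = (1 - t)⁻¹ := by field_simp; ring
  have e3 : (1 - t) ^ (-a) = ((1 - t) ^ a)⁻¹ := Real.rpow_neg ht1.le a
  have hra : (0:ℝ) < (1 - t) ^ a := Real.rpow_pos_of_pos ht1 a
  rw [smul_eq_mul, abs_of_nonneg (by positivity : (0:ℝ) ≤ ((1 - t) ^ 2)⁻¹), e1, e2, e3]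
  field_simp

lemma CaB_eq {a : ℝ} (ha0 : 0 < a) (ha1 : a < 1) :
    CaB a = π * a / Real.sin (π * a) := by
  have hre1 : (0:ℝ) < 1 + a := by linarith
  have hre2 : (0:ℝ) < 1 - a := by linarith
  have hb := Complex.Gamma_mul_Gamma_eq_betaIntegral
    (s := ((1 + a : ℝ) : ℂ)) (t := ((1 - a : ℝ) : ℂ))
    (by rw [Complex.ofReal_re]; exact hre1) (by rw [Complex.ofReal_re]; exact hre2)
  have hsum : ((1 + a : ℝ) : ℂ) + ((1 - a : ℝ) : ℂ) = ((2:ℝ) : ℂ) := by push_cast; ring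
  rw [hsum] at hb
  rw [show Complex.Gamma (((2:ℝ)) : ℂ) = 1 by
    rw [Complex.Gamma_ofReal, Real.Gamma_two, Complex.ofReal_one], one_mul] at hb
  have hbeta : Complex.betaIntegral ((1 + a : ℝ) : ℂ) ((1 - a : ℝ) : ℂ)
      = ((∫ x in (0:ℝ)..1, x ^ a * (1 - x) ^ (-a) : ℝ) : ℂ) := by
    rw [Complex.betaIntegral, ← intervalIntegral.integral_ofReal]
    refine intervalIntegral.integral_congr fun x hx => ?_
    rw [uIcc_of_le zero_le_one] at hx
    have hx0 : (0:ℝ) ≤ x := hx.1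
    have hx1 : (0:ℝ) ≤ 1 - x := by linarith [hx.2]
    have e1 : ((1 + a : ℝ) : ℂ) - 1 = ((a : ℝ) : ℂ) := by push_cast; ring
    have e2 : ((1 - a : ℝ) : ℂ) - 1 = ((-a : ℝ) : ℂ) := by push_cast; ring
    have e3 : (1 : ℂ) - (x : ℂ) = ((1 - x : ℝ) : ℂ) := by push_cast; ring
    rw [Complex.ofReal_mul, e1, e2, e3, Complex.ofReal_cpow hx0, Complex.ofReal_cpow hx1]
  rw [hbeta, Complex.Gamma_ofReal, Complex.Gamma_ofReal, ← Complex.ofReal_mul] at hb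
  have hreal : Real.Gamma (1 + a) * Real.Gamma (1 - a)
      = ∫ x in (0:ℝ)..1, x ^ a * (1 - x) ^ (-a) := Complex.ofReal_inj.mp hb
  have hIoo : (∫ x in (0:ℝ)..1, x ^ a * (1 - x) ^ (-a))
      = ∫ t in Ioo (0:ℝ) 1, t ^ a * (1 - t) ^ (-a) := by
    rw [intervalIntegral.integral_of_le zero_le_one, MeasureTheory.integral_Ioc_eq_integral_Ioo]
  rw [CaB_eq_Ioo ha0 ha1, ← hIoo, ← hreal, add_comm 1 a, Real.Gamma_add_one ha0.ne',
    mul_assoc, Real.Gamma_mul_Gamma_one_sub]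
  ring

lemma CaB_pos {a : ℝ} (ha0 : 0 < a) (ha1 : a < 1) : 0 < CaB a := by
  rw [CaB_eq ha0 ha1]
  have hs : 0 < Real.sin (π * a) :=
    Real.sin_pos_of_pos_of_lt_pi (by positivity)
      (by nlinarith [Real.pi_pos])
  positivity

/- ### substitution lemmas -/

lemma integral_inv_Ioi_zero (g : ℝ → ℝ) :
    ∫ x in Ioi (0:ℝ), g x = ∫ x in Ioi (0:ℝ), (x ^ 2)⁻¹ * g x⁻¹ := by
  have himg : (fun x : ℝ => x⁻¹) '' (Ioi 0) = Ioi 0 := by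
    ext y
    constructor
    · rintro ⟨x, hx, rfl⟩; exact mem_Ioi.mpr (inv_pos.mpr (mem_Ioi.mp hx))
    · intro hy; exact ⟨y⁻¹, mem_Ioi.mpr (inv_pos.mpr (mem_Ioi.mp hy)), inv_inv y⟩
  have h := integral_image_eq_integral_abs_deriv_smul (f' := fun x : ℝ => -(x ^ 2)⁻¹)
    measurableSet_Ioi
    (fun x hx => (hasDerivAt_inv (ne_of_gt (mem_Ioi.mp hx))).hasDerivWithinAt)
    (inv_injective.injOn) g
  rw [himg] at h
  rw [h]
  refine setIntegral_congr_fun measurableSet_Ioi fun x hx => ?_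
  have h0 : (0:ℝ) < x := hx
  rw [smul_eq_mul, abs_neg, abs_inv, abs_of_nonneg (by positivity : (0:ℝ) ≤ x ^ 2)]

lemma integral_inv_Ioo (g : ℝ → ℝ) :
    ∫ x in Ioo (0:ℝ) 1, g x = ∫ x in Ioi (1:ℝ), (x ^ 2)⁻¹ * g x⁻¹ := by
  have himg : (fun x : ℝ => x⁻¹) '' (Ioi 1) = Ioo 0 1 := by
    ext y
    constructor
    · rintro ⟨x, hx, rfl⟩
      have hx1 : (1:ℝ) < x := hx
      exact ⟨inv_pos.mpr (lt_trans one_pos hx1), inv_lt_one_of_one_lt₀ hx1⟩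
    · intro hy
      refine ⟨y⁻¹, ?_, inv_inv y⟩
      exact mem_Ioi.mpr ((one_lt_inv₀ hy.1).mpr hy.2)
  have h := integral_image_eq_integral_abs_deriv_smul (f' := fun x : ℝ => -(x ^ 2)⁻¹)
    measurableSet_Ioi
    (fun x hx => (hasDerivAt_inv (by
      have : (1:ℝ) < x := hx; positivity)).hasDerivWithinAt)
    (inv_injective.injOn) g
  rw [himg] at h
  rw [h]
  refine setIntegral_congr_fun measurableSet_Ioi fun x hx => ?_
  have h0 : (1:ℝ) < x := hx
  rw [smul_eq_mul, abs_neg, abs_inv, abs_of_nonneg (by positivity : (0:ℝ) ≤ x ^ 2)]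

lemma integral_scale {u : ℝ} (hu : 0 < u) (b : ℝ) :
    ∫ x in Ioi (0:ℝ), x ^ b / (x + u) ^ 2 = u ^ (b - 1) * ∫ x in Ioi (0:ℝ), x ^ b / (x + 1) ^ 2 := by
  have h := MeasureTheory.integral_comp_mul_left_Ioi
    (fun x : ℝ => x ^ b / (x + u) ^ 2) 0 hu
  rw [mul_zero] at h
  have h2 : ∫ x in Ioi (0:ℝ), (u * x) ^ b / (u * x + u) ^ 2
      = (u ^ b / u ^ (2:ℕ)) * ∫ x in Ioi (0:ℝ), x ^ b / (x + 1) ^ 2 := by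
    rw [← MeasureTheory.integral_const_mul]
    refine setIntegral_congr_fun measurableSet_Ioi fun x hx => ?_
    have h0 : (0:ℝ) < x := hx
    rw [Real.mul_rpow hu.le h0.le]
    have : (u * x + u) ^ 2 = u ^ 2 * (x + 1) ^ 2 := by ring
    rw [this]
    field_simp
  simp only [smul_eq_mul] at h
  rw [h2] at h
  have hu' : u ≠ 0 := hu.ne'
  have key : (∫ x in Ioi (0:ℝ), x ^ b / (x + u) ^ 2)
      = u * ((u ^ b / u ^ (2:ℕ)) * ∫ x in Ioi (0:ℝ), x ^ b / (x + 1) ^ 2) := by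
    rw [h, ← mul_assoc, mul_inv_cancel₀ hu', one_mul]
  rw [key, Real.rpow_sub hu, Real.rpow_one]
  field_simp

lemma integral_rpow_ker_pos {a u : ℝ} (ha0 : 0 < a) (ha1 : a < 1) (hu : 0 < u) :
    ∫ x in Ioi (0:ℝ), x ^ a / (x + u) ^ 2 = u ^ (a - 1) * CaB a :=
  by rw [integral_scale hu a]; rfl

lemma integral_rpow_ker_neg {a u : ℝ} (ha0 : 0 < a) (ha1 : a < 1) (hu : 0 < u) :
    ∫ x in Ioi (0:ℝ), x ^ (-a) / (x + u) ^ 2 = u ^ (-a - 1) * CaB a := by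
  rw [integral_inv_Ioi_zero (fun x => x ^ (-a) / (x + u) ^ 2)]
  have hptw : ∀ x ∈ Ioi (0:ℝ), (x ^ 2)⁻¹ * ((x⁻¹) ^ (-a) / (x⁻¹ + u) ^ 2)
      = (u ^ 2)⁻¹ * (x ^ a / (x + u⁻¹) ^ 2) := by
    intro x hx
    have h0 : (0:ℝ) < x := hx
    have e1 : (x⁻¹) ^ (-a) = x ^ a := by
      rw [Real.inv_rpow h0.le, ← Real.rpow_neg h0.le, neg_neg]
    have e2 : (x⁻¹ + u) ^ 2 = (1 + u * x) ^ 2 / x ^ 2 := by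
      field_simp
    have e3 : (1 + u * x) ^ 2 = u ^ 2 * (x + u⁻¹) ^ 2 := by
      field_simp; ring
    rw [e1, e2, e3]
    have hxu : (0:ℝ) < x + u⁻¹ := by positivity
    field_simp
  rw [setIntegral_congr_fun measurableSet_Ioi hptw, MeasureTheory.integral_const_mul,
    integral_rpow_ker_pos ha0 ha1 (inv_pos.mpr hu)]
  have e4 : (u⁻¹) ^ (a - 1) = u ^ (1 - a) := by
    rw [Real.inv_rpow hu.le, ← Real.rpow_neg hu.le, (by ring : -(a-1) = 1 - a)]
  have e5 : ((u ^ 2 : ℝ))⁻¹ = u ^ (-2 : ℝ) := by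
    rw [← Real.rpow_natCast u 2, ← Real.rpow_neg hu.le]; norm_num
  rw [e4, e5, ← mul_assoc, ← Real.rpow_add hu, (by ring : (-2:ℝ) + (1 - a) = -a - 1)]

lemma integrableOn_rpow_ker {b u : ℝ} (hb0 : -1 < b) (hb1 : b < 1) (hu : 0 < u) :
    IntegrableOn (fun x : ℝ => x ^ b / (x + u) ^ 2) (Ioi (0:ℝ)) := by
  rw [← Set.Ioc_union_Ioi_eq_Ioi (zero_le_one (α := ℝ))]
  apply MeasureTheory.IntegrableOn.union
  · rw [integrableOn_Ioc_iff_integrableOn_Ioo]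
    refine Integrable.mono' (((intervalIntegral.integrableOn_Ioo_rpow_iff one_pos).mpr
      hb0).const_mul ((u ^ 2)⁻¹)) ?_ ?_
    · refine ContinuousOn.aestronglyMeasurable ?_ measurableSet_Ioo
      intro x hx
      have h0 : (0:ℝ) < x := hx.1
      exact (((Real.continuousAt_rpow_const x b (Or.inl h0.ne'))).continuousWithinAt.div
        ((continuousWithinAt_id.add continuousWithinAt_const).pow 2) (by positivity))
    · refine (ae_restrict_mem measurableSet_Ioo).mono fun x hx => ?_
      have h0 : (0:ℝ) < x := hx.1
      have h2 : u ^ 2 ≤ (x + u) ^ 2 := by nlinarith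
      rw [Real.norm_eq_abs, abs_of_nonneg (by positivity), mul_comm]
      exact div_le_div_of_nonneg_left (by positivity) (by positivity) h2
  · refine Integrable.mono' (integrableOn_Ioi_rpow_of_lt
      (by linarith : b - 2 < -1) one_pos) ?_ ?_
    · refine ContinuousOn.aestronglyMeasurable ?_ measurableSet_Ioi
      intro x hx
      have h0 : (0:ℝ) < x := lt_trans one_pos hx
      exact (((Real.continuousAt_rpow_const x b (Or.inl h0.ne'))).continuousWithinAt.div
        ((continuousWithinAt_id.add continuousWithinAt_const).pow 2) (by positivity))
    · refine (ae_restrict_mem measurableSet_Ioi).mono fun x hx => ?_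
      have hx1 : (1:ℝ) < x := hx
      have h0 : (0:ℝ) < x := by linarith
      have h2 : x ^ 2 ≤ (x + u) ^ 2 := by nlinarith
      have e : x ^ ((2:ℝ)) = x ^ (2:ℕ) := by
        rw [← Real.rpow_natCast x 2]; norm_num
      rw [Real.norm_eq_abs, abs_of_nonneg (by positivity), Real.rpow_sub h0, e]
      exact div_le_div_of_nonneg_left (by positivity) (by positivity) h2

/- ### The M-function identity -/

lemma MmB_identity {a u : ℝ} (ha0 : 0 < a) (ha1 : a < 1) (hu : 0 < u) :
    MmB a u + (u ^ 2)⁻¹ * MmB a u⁻¹ = CaB a * (u ^ (a - 1) + u ^ (-a - 1)) := by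
  have hIa : IntegrableOn (fun x : ℝ => x ^ a / (x + u) ^ 2) (Ioi 0) :=
    integrableOn_rpow_ker (by linarith) ha1 hu
  have hIna : IntegrableOn (fun x : ℝ => x ^ (-a) / (x + u) ^ 2) (Ioi 0) :=
    integrableOn_rpow_ker (by linarith) (by linarith) hu
  have hfun : (fun x : ℝ => phiB a x * ((x + u) ^ 2)⁻¹)
      = fun x => x ^ a / (x + u) ^ 2 + x ^ (-a) / (x + u) ^ 2 := by
    funext x; simp only [phiB, div_eq_mul_inv]; ring
  have hint : IntegrableOn (fun x : ℝ => phiB a x * ((x + u) ^ 2)⁻¹) (Ioi 0) := by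
    rw [hfun]; exact hIa.add hIna
  have hsplit : (∫ x in Ioi (0:ℝ), phiB a x * ((x + u) ^ 2)⁻¹)
      = (∫ x in Ioc (0:ℝ) 1, phiB a x * ((x + u) ^ 2)⁻¹)
        + ∫ x in Ioi (1:ℝ), phiB a x * ((x + u) ^ 2)⁻¹ := by
    rw [← MeasureTheory.setIntegral_union (Set.Ioc_disjoint_Ioi le_rfl) measurableSet_Ioi
      (hint.mono_set (Set.Ioc_subset_Ioi_self)) (hint.mono_set (fun x hx => by
        have : (1:ℝ) < x := hx; exact mem_Ioi.mpr (by linarith))),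
      Set.Ioc_union_Ioi_eq_Ioi zero_le_one]
  have hval : (∫ x in Ioi (0:ℝ), phiB a x * ((x + u) ^ 2)⁻¹)
      = CaB a * (u ^ (a - 1) + u ^ (-a - 1)) := by
    rw [hfun, MeasureTheory.integral_add hIa hIna,
      integral_rpow_ker_pos ha0 ha1 hu, integral_rpow_ker_neg ha0 ha1 hu]
    ring
  have h1 : (∫ x in Ioc (0:ℝ) 1, phiB a x * ((x + u) ^ 2)⁻¹)
      = (u ^ 2)⁻¹ * MmB a u⁻¹ := by
    rw [MeasureTheory.integral_Ioc_eq_integral_Ioo,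
      integral_inv_Ioo (fun x => phiB a x * ((x + u) ^ 2)⁻¹)]
    rw [MmB, ← MeasureTheory.integral_const_mul]
    refine setIntegral_congr_fun measurableSet_Ioi fun x hx => ?_
    have hx1 : (1:ℝ) < x := hx
    have h0 : (0:ℝ) < x := by linarith
    rw [phiB_inv h0]
    have e2 : (x⁻¹ + u) ^ 2 = (1 + u * x) ^ 2 / x ^ 2 := by field_simp
    have e3 : (1 + u * x) ^ 2 = u ^ 2 * (x + u⁻¹) ^ 2 := by field_simp; ring
    rw [e2, e3]
    have hxu : (0:ℝ) < x + u⁻¹ := by positivity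
    field_simp
  have h2 : (∫ x in Ioi (1:ℝ), phiB a x * ((x + u) ^ 2)⁻¹) = MmB a u := rfl
  rw [h1, h2] at hsplit
  rw [← hval, hsplit]
  ring

/- ### F and its derivative -/

lemma MmB_integrable {a u : ℝ} (ha0 : 0 < a) (ha1 : a < 1) (hu : 0 < u) :
    IntegrableOn (fun x => phiB a x * ((x + u) ^ 2)⁻¹) (Ioi (1:ℝ)) := by
  refine integrableOn_phiB_mul ha0.le ha1 1 ?_ ?_
  · intro x hx
    have : (0:ℝ) < x + u := by have : (1:ℝ) < x := hx; linarith
    exact ContinuousWithinAt.inv₀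
      ((continuousWithinAt_id.add continuousWithinAt_const).pow 2) (by positivity)
  · intro x hx
    have hx1 : (1:ℝ) < x := hx
    have h1 : (0:ℝ) < x := by linarith
    have h2 : x ^ 2 ≤ (x + u) ^ 2 := by nlinarith
    rw [abs_of_nonneg (by positivity), one_mul]
    exact inv_anti₀ (by positivity) h2

lemma FfB_hasDeriv {a t : ℝ} (ha0 : 0 < a) (ha1 : a < 1) (ht : 0 < t) :
    HasDerivAt (FfB a) ((t ^ 2)⁻¹ * MmB a t⁻¹ + MmB a t) t := by
  have hball : ∀ τ ∈ Metric.ball t (t/2), t/2 < τ := by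
    intro τ hτ
    have h := abs_lt.mp (mem_ball_iff_norm.mp hτ)
    linarith [h.1]
  have key := hasDerivAt_integral_of_dominated_loc_of_deriv_le
    (μ := volume.restrict (Ioi 1))
    (F := fun τ x => phiB a x * ((x + τ⁻¹)⁻¹ - (x + τ)⁻¹))
    (F' := fun τ x => phiB a x * ((τ ^ 2)⁻¹ * ((x + τ⁻¹) ^ 2)⁻¹ + ((x + τ) ^ 2)⁻¹))
    (x₀ := t) (bound := fun x => 2 * (((t/2) ^ 2)⁻¹ + 1) * x ^ (a - 2))
    (Metric.ball_mem_nhds t (half_pos ht)) ?_ ?_ ?_ ?_ ?_ ?_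
  · -- identify the function and the value
    have hfun : FfB a = fun τ => ∫ x in Ioi (1:ℝ), phiB a x * ((x + τ⁻¹)⁻¹ - (x + τ)⁻¹) := rfl
    rw [hfun]
    refine key.2.congr_deriv ?_
    have hsplit : (fun x : ℝ => phiB a x * ((t ^ 2)⁻¹ * ((x + t⁻¹) ^ 2)⁻¹ + ((x + t) ^ 2)⁻¹))
        = (fun x : ℝ => (t ^ 2)⁻¹ * (phiB a x * ((x + t⁻¹) ^ 2)⁻¹))
          + fun x : ℝ => phiB a x * ((x + t) ^ 2)⁻¹ := by
      funext x; simp only [Pi.add_apply]; ring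
    have hsp2 : (∫ x in Ioi (1:ℝ), phiB a x * ((t ^ 2)⁻¹ * ((x + t⁻¹) ^ 2)⁻¹ + ((x + t) ^ 2)⁻¹))
        = ∫ x in Ioi (1:ℝ), ((t ^ 2)⁻¹ * (phiB a x * ((x + t⁻¹) ^ 2)⁻¹)
            + phiB a x * ((x + t) ^ 2)⁻¹) :=
      MeasureTheory.integral_congr_ae (Eventually.of_forall fun x => by ring)
    rw [hsp2, MeasureTheory.integral_add ((MmB_integrable ha0 ha1 (inv_pos.mpr ht)).const_mul _)
      (MmB_integrable ha0 ha1 ht), MeasureTheory.integral_const_mul]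
    rfl
  · -- measurability near t
    filter_upwards [Metric.ball_mem_nhds t (half_pos ht)] with τ hτ
    have hτ0 : 0 < τ := lt_trans (half_pos ht) (hball τ hτ)
    refine ContinuousOn.aestronglyMeasurable ?_ measurableSet_Ioi
    refine (continuousOn_phiB (fun x hx => lt_trans one_pos hx)).mul ?_
    intro x hx
    have hx1 : (1:ℝ) < x := hx
    have h1 : (0:ℝ) < x + τ⁻¹ := by positivity
    have h2 : (0:ℝ) < x + τ := by positivity
    exact ((continuousWithinAt_id.add continuousWithinAt_const).inv₀ h1.ne').sub
      ((continuousWithinAt_id.add continuousWithinAt_const).inv₀ h2.ne')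
  · -- integrability at t
    refine integrableOn_phiB_mul ha0.le ha1 (|t - t⁻¹|) ?_ ?_
    · intro x hx
      have hx1 : (1:ℝ) < x := hx
      have h1 : (0:ℝ) < x + t⁻¹ := by positivity
      have h2 : (0:ℝ) < x + t := by positivity
      exact ((continuousWithinAt_id.add continuousWithinAt_const).inv₀ h1.ne').sub
        ((continuousWithinAt_id.add continuousWithinAt_const).inv₀ h2.ne')
    · intro x hx
      have hx1 : (1:ℝ) < x := hx
      have h0 : (0:ℝ) < x := by linarith
      have h1 : (0:ℝ) < x + t⁻¹ := by positivity
      have h2 : (0:ℝ) < x + t := by positivity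
      have e : (x + t⁻¹)⁻¹ - (x + t)⁻¹ = (t - t⁻¹) / ((x + t⁻¹) * (x + t)) := by
        field_simp
        ring
      rw [e, abs_div, abs_of_pos (by positivity : (0:ℝ) < (x + t⁻¹) * (x + t)),
        div_eq_mul_inv]
      have hx2 : x ^ 2 ≤ (x + t⁻¹) * (x + t) := by
        nlinarith [mul_pos h0 ht, mul_pos h0 (inv_pos.mpr ht)]
      gcongr
  · -- measurability of F' t
    refine ContinuousOn.aestronglyMeasurable ?_ measurableSet_Ioi
    refine (continuousOn_phiB (fun x hx => lt_trans one_pos hx)).mul ?_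
    intro x hx
    have hx1 : (1:ℝ) < x := hx
    have h1 : (0:ℝ) < x + t⁻¹ := by positivity
    have h2 : (0:ℝ) < x + t := by positivity
    exact (continuousWithinAt_const.mul
      (((continuousWithinAt_id.add continuousWithinAt_const).pow 2).inv₀ (pow_ne_zero 2 h1.ne'))).add
      (((continuousWithinAt_id.add continuousWithinAt_const).pow 2).inv₀ (pow_ne_zero 2 h2.ne'))
  · -- bound
    refine (ae_restrict_mem measurableSet_Ioi).mono fun x hx τ hτ => ?_
    have hx1 : (1:ℝ) < x := hx
    have h0 : (0:ℝ) < x := by linarith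
    have hτ2 : t/2 < τ := hball τ hτ
    have hτ0 : 0 < τ := lt_trans (half_pos ht) hτ2
    have hA : (τ ^ 2)⁻¹ * ((x + τ⁻¹) ^ 2)⁻¹ ≤ ((t/2) ^ 2)⁻¹ * (x ^ 2)⁻¹ := by
      have e1 : (τ ^ 2)⁻¹ ≤ ((t/2) ^ 2)⁻¹ :=
        inv_anti₀ (by positivity) (by nlinarith)
      have e2 : ((x + τ⁻¹) ^ 2)⁻¹ ≤ (x ^ 2)⁻¹ :=
        inv_anti₀ (by positivity) (by nlinarith [inv_pos.mpr hτ0])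
      exact mul_le_mul e1 e2 (by positivity) (by positivity)
    have hB : ((x + τ) ^ 2)⁻¹ ≤ (x ^ 2)⁻¹ :=
      inv_anti₀ (by positivity) (by nlinarith)
    have hphi : 0 ≤ phiB a x := phiB_nonneg h0
    have hphile : phiB a x ≤ 2 * x ^ a := phiB_le ha0.le hx1.le
    rw [Real.norm_eq_abs, abs_of_nonneg (by positivity)]
    have step : phiB a x * ((τ ^ 2)⁻¹ * ((x + τ⁻¹) ^ 2)⁻¹ + ((x + τ) ^ 2)⁻¹)
        ≤ (2 * x ^ a) * ((((t/2) ^ 2)⁻¹ + 1) * (x ^ 2)⁻¹) := by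
      apply mul_le_mul hphile _ (by positivity) (by positivity)
      calc (τ ^ 2)⁻¹ * ((x + τ⁻¹) ^ 2)⁻¹ + ((x + τ) ^ 2)⁻¹
          ≤ ((t/2) ^ 2)⁻¹ * (x ^ 2)⁻¹ + (x ^ 2)⁻¹ := add_le_add hA hB
        _ = (((t/2) ^ 2)⁻¹ + 1) * (x ^ 2)⁻¹ := by ring
    refine step.trans (le_of_eq ?_)
    have hx2 : (x ^ 2)⁻¹ = x ^ (-2 : ℝ) := by
      rw [← Real.rpow_natCast x 2, ← Real.rpow_neg h0.le]; norm_num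
    rw [hx2, show (2 * x ^ a) * ((((t/2) ^ 2)⁻¹ + 1) * x ^ (-2:ℝ))
      = 2 * ((((t/2) ^ 2)⁻¹) + 1) * (x ^ a * x ^ (-2:ℝ)) by ring, ← Real.rpow_add h0]
    ring_nf
  · -- bound integrable
    exact integrableOn_bound ha1 _
  · -- differentiability
    refine (ae_restrict_mem measurableSet_Ioi).mono fun x hx τ hτ => ?_
    have hx1 : (1:ℝ) < x := hx
    have h0 : (0:ℝ) < x := by linarith
    have hτ0 : 0 < τ := lt_trans (half_pos ht) (hball τ hτ)
    have h1 : (0:ℝ) < x + τ⁻¹ := by positivity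
    have h2 : (0:ℝ) < x + τ := by positivity
    have hd1 : HasDerivAt (fun τ : ℝ => x + τ⁻¹) (-(τ^2)⁻¹) τ :=
      (hasDerivAt_inv hτ0.ne').const_add x
    have hd1' : HasDerivAt (fun τ : ℝ => (x + τ⁻¹)⁻¹) (-(-(τ^2)⁻¹) / (x + τ⁻¹)^2) τ :=
      hd1.inv h1.ne'
    have hd2 : HasDerivAt (fun τ : ℝ => x + τ) 1 τ := (hasDerivAt_id τ).const_add x
    have hd2' : HasDerivAt (fun τ : ℝ => (x + τ)⁻¹) (-1 / (x + τ)^2) τ := hd2.inv h2.ne'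
    have hd := (hd1'.sub hd2').const_mul (phiB a x)
    refine hd.congr_deriv ?_
    ring

lemma FfB_eq {a v : ℝ} (ha0 : 0 < a) (ha1 : a < 1) (hv : 1 ≤ v) :
    FfB a v = (CaB a / a) * (v ^ a - v ^ (-a)) := by
  have hder : ∀ t ∈ uIcc (1:ℝ) v, HasDerivAt
      (fun t => FfB a t - (CaB a / a) * (t ^ a - t ^ (-a))) 0 t := by
    intro t ht
    rw [uIcc_of_le hv] at ht
    have ht0 : (0:ℝ) < t := lt_of_lt_of_le one_pos ht.1
    have h1 := FfB_hasDeriv ha0 ha1 ht0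
    have d1 : HasDerivAt (fun t : ℝ => t ^ a) (a * t ^ (a - 1)) t :=
      Real.hasDerivAt_rpow_const (Or.inl ht0.ne')
    have d2 : HasDerivAt (fun t : ℝ => t ^ (-a)) (-a * t ^ (-a - 1)) t :=
      Real.hasDerivAt_rpow_const (Or.inl ht0.ne')
    have h2 := (d1.sub d2).const_mul (CaB a / a)
    have h3 := h1.sub h2
    refine h3.congr_deriv ?_
    have hid := MmB_identity ha0 ha1 ht0
    have e1 : (t ^ 2)⁻¹ * MmB a t⁻¹ + MmB a t = CaB a * (t ^ (a - 1) + t ^ (-a - 1)) := by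
      rw [← hid]; ring
    rw [e1]
    field_simp
    ring
  have hFTC := intervalIntegral.integral_eq_sub_of_hasDerivAt hder
    (intervalIntegrable_const (c := (0:ℝ)))
  simp only [intervalIntegral.integral_zero] at hFTC
  have hF1 : FfB a 1 = 0 := by
    have : ∀ x : ℝ, phiB a x * ((x + (1:ℝ)⁻¹)⁻¹ - (x + 1)⁻¹) = 0 := by
      intro x; rw [inv_one]; ring
    rw [FfB]
    simp only [this, MeasureTheory.integral_zero]
  have h1v : (1:ℝ) ^ a - (1:ℝ) ^ (-a) = 0 := by
    rw [Real.one_rpow, Real.one_rpow]; ring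
  have := hFTC.symm
  rw [hF1, h1v] at this
  have : FfB a v - (CaB a / a) * (v ^ a - v ^ (-a)) = 0 := by linarith [this]
  linarith [this]

lemma KkB_integrable {a : ℝ} (ha0 : 0 < a) (ha1 : a < 1) (n : ℕ) {w : ℝ} (hw : 0 < w) :
    IntegrableOn (fun x => phiB a x * (x ^ n / (x ^ 2 + w * x + 1) ^ (n + 1))) (Ioi (1:ℝ)) := by
  refine integrableOn_phiB_mul ha0.le ha1 1 ?_ ?_
  · intro x hx
    have hx1 : (1:ℝ) < x := hx
    have hq0 : (0:ℝ) < x ^ 2 + w * x + 1 := by nlinarith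
    have c2 : ContinuousWithinAt (fun x : ℝ => (x ^ 2 + w * x + 1) ^ (n + 1)) (Ioi 1) x :=
      (((continuousWithinAt_id.pow 2).add
        (continuousWithinAt_const.mul continuousWithinAt_id)).add
        continuousWithinAt_const).pow (n + 1)
    exact (continuousWithinAt_id.pow n).div c2 (by positivity)
  · intro x hx
    have hx1 : (1:ℝ) < x := hx
    have h0 : (0:ℝ) < x := by linarith
    have hq : x ^ 2 ≤ x ^ 2 + w * x + 1 := by nlinarith
    have hq0 : (0:ℝ) < x ^ 2 + w * x + 1 := by nlinarith
    have h1 : (x ^ 2) ^ (n + 1) ≤ (x ^ 2 + w * x + 1) ^ (n + 1) :=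
      pow_le_pow_left₀ (by positivity) hq (n + 1)
    have e : ((x:ℝ) ^ 2) ^ (n + 1) = x ^ n * x ^ (n + 2) := by
      rw [← pow_mul, ← pow_add]; congr 1; omega
    rw [abs_of_nonneg (by positivity), one_mul]
    calc x ^ n / (x ^ 2 + w * x + 1) ^ (n + 1)
        ≤ x ^ n / (x ^ n * x ^ (n + 2)) := by
          gcongr
          rw [← e]; exact h1
      _ = (x ^ (n + 2))⁻¹ := by
          rw [div_eq_iff (by positivity : (0:ℝ) < x ^ n * x ^ (n + 2)).ne']
          field_simp
      _ ≤ (x ^ 2)⁻¹ :=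
          inv_anti₀ (by positivity) (pow_le_pow_right₀ hx1.le (by omega))

/- ### K and its derivative -/

lemma KkB_nonneg {a : ℝ} (n : ℕ) {w : ℝ} (hw : 2 < w) : 0 ≤ KkB a n w := by
  apply setIntegral_nonneg measurableSet_Ioi
  intro x hx
  have hx1 : (1:ℝ) < x := hx
  have h0 : (0:ℝ) < x := by linarith
  have hden : (0:ℝ) < x ^ 2 + w * x + 1 := by nlinarith
  have := phiB_nonneg (a := a) h0
  positivity

lemma KkB_hasDeriv {a : ℝ} (ha0 : 0 < a) (ha1 : a < 1) (n : ℕ) {w : ℝ} (hw : 2 < w) :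
    HasDerivAt (KkB a n) (-((n : ℝ) + 1) * KkB a (n + 1) w) w := by
  have hε : (0:ℝ) < (w - 2) / 2 := by linarith
  have hball : ∀ τ ∈ Metric.ball w ((w - 2) / 2), 2 < τ := by
    intro τ hτ
    have h := abs_lt.mp (mem_ball_iff_norm.mp hτ)
    linarith [h.1]
  have key := hasDerivAt_integral_of_dominated_loc_of_deriv_le
    (μ := volume.restrict (Ioi 1))
    (F := fun τ x => phiB a x * (x ^ n / (x ^ 2 + τ * x + 1) ^ (n + 1)))
    (F' := fun τ x => phiB a x *
      (-((n : ℝ) + 1) * (x ^ (n + 1) / (x ^ 2 + τ * x + 1) ^ (n + 2))))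
    (x₀ := w) (bound := fun x => 2 * ((n : ℝ) + 1) * x ^ (a - 2))
    (Metric.ball_mem_nhds w hε) ?_ ?_ ?_ ?_ ?_ ?_
  · have hfun : KkB a n = fun τ => ∫ x in Ioi (1:ℝ),
        phiB a x * (x ^ n / (x ^ 2 + τ * x + 1) ^ (n + 1)) := rfl
    rw [hfun]
    refine key.2.congr_deriv ?_
    rw [KkB, ← MeasureTheory.integral_const_mul]
    exact MeasureTheory.integral_congr_ae (Eventually.of_forall fun x => by ring)
  · filter_upwards [Metric.ball_mem_nhds w hε] with τ hτ
    have hτ2 : 2 < τ := hball τ hτ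
    refine ContinuousOn.aestronglyMeasurable ?_ measurableSet_Ioi
    refine (continuousOn_phiB (fun x hx => lt_trans one_pos hx)).mul ?_
    intro x hx
    have hx1 : (1:ℝ) < x := hx
    have hq0 : (0:ℝ) < x ^ 2 + τ * x + 1 := by nlinarith
    exact (continuousWithinAt_id.pow n).div
      ((((continuousWithinAt_id.pow 2).add
        (continuousWithinAt_const.mul continuousWithinAt_id)).add
        continuousWithinAt_const).pow (n + 1)) (by positivity)
  · exact KkB_integrable ha0 ha1 n (by linarith : (0:ℝ) < w)
  · refine ContinuousOn.aestronglyMeasurable ?_ measurableSet_Ioi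
    refine (continuousOn_phiB (fun x hx => lt_trans one_pos hx)).mul ?_
    intro x hx
    have hx1 : (1:ℝ) < x := hx
    have hq0 : (0:ℝ) < x ^ 2 + w * x + 1 := by nlinarith
    exact continuousWithinAt_const.mul ((continuousWithinAt_id.pow (n + 1)).div
      ((((continuousWithinAt_id.pow 2).add
        (continuousWithinAt_const.mul continuousWithinAt_id)).add
        continuousWithinAt_const).pow (n + 2)) (by positivity))
  · refine (ae_restrict_mem measurableSet_Ioi).mono fun x hx τ hτ => ?_
    have hx1 : (1:ℝ) < x := hx
    have h0 : (0:ℝ) < x := by linarith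
    have hτ2 : 2 < τ := hball τ hτ
    have hq : x ^ 2 ≤ x ^ 2 + τ * x + 1 := by nlinarith
    have hq0 : (0:ℝ) < x ^ 2 + τ * x + 1 := by nlinarith
    have hphi : 0 ≤ phiB a x := phiB_nonneg h0
    have h1 : (x ^ 2) ^ (n + 2) ≤ (x ^ 2 + τ * x + 1) ^ (n + 2) :=
      pow_le_pow_left₀ (by positivity) hq (n + 2)
    have e : ((x:ℝ) ^ 2) ^ (n + 2) = x ^ (n + 1) * x ^ (n + 3) := by
      rw [← pow_mul, ← pow_add]; congr 1; omega
    have hstep : x ^ (n + 1) / (x ^ 2 + τ * x + 1) ^ (n + 2) ≤ (x ^ 2)⁻¹ := by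
      calc x ^ (n + 1) / (x ^ 2 + τ * x + 1) ^ (n + 2)
          ≤ x ^ (n + 1) / (x ^ (n + 1) * x ^ (n + 3)) := by
            gcongr
            rw [← e]; exact h1
        _ = (x ^ (n + 3))⁻¹ := by
            rw [div_eq_iff (by positivity : (0:ℝ) < x ^ (n + 1) * x ^ (n + 3)).ne']
            field_simp
        _ ≤ (x ^ 2)⁻¹ :=
            inv_anti₀ (by positivity) (pow_le_pow_right₀ hx1.le (by omega))
    have hT0 : (0:ℝ) ≤ x ^ (n + 1) / (x ^ 2 + τ * x + 1) ^ (n + 2) := by positivity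
    have habs : |(-((n : ℝ) + 1) * (x ^ (n + 1) / (x ^ 2 + τ * x + 1) ^ (n + 2)))|
        = ((n : ℝ) + 1) * (x ^ (n + 1) / (x ^ 2 + τ * x + 1) ^ (n + 2)) := by
      rw [abs_mul, abs_neg, abs_of_nonneg (by positivity : (0:ℝ) ≤ (n : ℝ) + 1),
        abs_of_nonneg hT0]
    rw [Real.norm_eq_abs, abs_mul, abs_of_nonneg hphi, habs]
    have hphile : phiB a x ≤ 2 * x ^ a := phiB_le ha0.le hx1.le
    have step : phiB a x * (((n : ℝ) + 1) * (x ^ (n + 1) / (x ^ 2 + τ * x + 1) ^ (n + 2)))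
        ≤ (2 * x ^ a) * (((n : ℝ) + 1) * (x ^ 2)⁻¹) := by
      apply mul_le_mul hphile _ (by positivity) (by positivity)
      exact mul_le_mul_of_nonneg_left hstep (by positivity)
    refine step.trans (le_of_eq ?_)
    have hx2 : (x ^ 2)⁻¹ = x ^ (-2 : ℝ) := by
      rw [← Real.rpow_natCast x 2, ← Real.rpow_neg h0.le]; norm_num
    rw [hx2, show (2 * x ^ a) * (((n : ℝ) + 1) * x ^ (-2:ℝ))
      = 2 * ((n : ℝ) + 1) * (x ^ a * x ^ (-2:ℝ)) by ring, ← Real.rpow_add h0]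
    ring_nf
  · exact integrableOn_bound ha1 _
  · refine (ae_restrict_mem measurableSet_Ioi).mono fun x hx τ hτ => ?_
    have hx1 : (1:ℝ) < x := hx
    have h0 : (0:ℝ) < x := by linarith
    have hτ2 : 2 < τ := hball τ hτ
    have hq0 : (0:ℝ) < x ^ 2 + τ * x + 1 := by nlinarith
    have hlin : HasDerivAt (fun τ : ℝ => x ^ 2 + τ * x + 1) x τ := by
      simpa using (((hasDerivAt_id τ).mul_const x).const_add (x ^ 2)).add_const 1
    have hpow : HasDerivAt (fun τ : ℝ => (x ^ 2 + τ * x + 1) ^ (n + 1))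
        (((n : ℝ) + 1) * (x ^ 2 + τ * x + 1) ^ n * x) τ := by
      simpa using hlin.fun_pow (n + 1)
    have hinv := hpow.inv (by positivity : ((x ^ 2 + τ * x + 1) ^ (n + 1) : ℝ) ≠ 0)
    have hd : HasDerivAt (fun τ' : ℝ => phiB a x * x ^ n * ((x ^ 2 + τ' * x + 1) ^ (n + 1))⁻¹) _ τ :=
      (hinv.const_mul (phiB a x * x ^ n))
    have hfun_eq : (fun τ' : ℝ => phiB a x * x ^ n * ((x ^ 2 + τ' * x + 1) ^ (n + 1))⁻¹)
        = fun τ' : ℝ => phiB a x * (x ^ n / (x ^ 2 + τ' * x + 1) ^ (n + 1)) := by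
      funext τ'
      ring
    rw [hfun_eq] at hd
    refine hd.congr_deriv ?_
    have e : ((x ^ 2 + τ * x + 1) ^ (n + 1) : ℝ) ^ 2
        = (x ^ 2 + τ * x + 1) ^ (n + 2) * (x ^ 2 + τ * x + 1) ^ n := by
      rw [← pow_mul, ← pow_add]; congr 1; omega
    rw [e]
    field_simp
    ring

lemma K0_eq {a : ℝ} (ha0 : 0 < a) (ha1 : a < 1) {w : ℝ} (hw : 2 < w) :
    KkB a 0 w = (CaB a / a) * (vOf w ^ a - vOf w ^ (-a)) / Real.sqrt (w ^ 2 - 4) := by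
  have hv1 : 1 < vOf w := vOf_one_lt hw
  have hv0 : (0:ℝ) < vOf w := vOf_pos hw
  have hs : vOf w - (vOf w)⁻¹ = Real.sqrt (w ^ 2 - 4) := vOf_sub_inv hw
  have hspos : 0 < Real.sqrt (w ^ 2 - 4) := vOf_sqrt_pos hw
  have hFK : FfB a (vOf w) = Real.sqrt (w ^ 2 - 4) * KkB a 0 w := by
    rw [FfB, KkB, ← MeasureTheory.integral_const_mul]
    refine setIntegral_congr_fun measurableSet_Ioi fun x hx => ?_
    have hx1 : (1:ℝ) < x := hx
    have h0 : (0:ℝ) < x := by linarith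
    have hq : (x + vOf w) * (x + (vOf w)⁻¹) = x ^ 2 + w * x + 1 := by
      have e : (x + vOf w) * (x + (vOf w)⁻¹)
          = x ^ 2 + (vOf w + (vOf w)⁻¹) * x + vOf w * (vOf w)⁻¹ := by ring
      rw [e, mul_inv_cancel₀ hv0.ne', vOf_add_inv hw]
    have h1 : (0:ℝ) < x + vOf w := by linarith
    have h2 : (0:ℝ) < x + (vOf w)⁻¹ := by positivity
    have e2 : (x + (vOf w)⁻¹)⁻¹ - (x + vOf w)⁻¹
        = (vOf w - (vOf w)⁻¹) / ((x + vOf w) * (x + (vOf w)⁻¹)) := by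
      field_simp
      ring
    rw [e2, hq, hs]
    rw [show (x:ℝ) ^ (0:ℕ) / (x ^ 2 + w * x + 1) ^ (0 + 1) = (x ^ 2 + w * x + 1)⁻¹ by
      rw [pow_zero, zero_add, pow_one, one_div]]
    rw [div_eq_mul_inv]
    ring
  have hFv := FfB_eq ha0 ha1 hv1.le
  rw [hFv] at hFK
  field_simp at hFK ⊢
  linarith [hFK]

lemma iteratedDeriv_const_zero' {m : ℕ} (hm : 1 ≤ m) (c : ℝ) (w : ℝ) :
    iteratedDeriv m (fun _ : ℝ => c) w = 0 := by
  obtain ⟨k, rfl⟩ : ∃ k, m = k + 1 := ⟨m - 1, by omega⟩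
  rw [iteratedDeriv_succ', deriv_const']
  induction k with
  | zero => simp
  | succ k ih => rw [iteratedDeriv_succ', deriv_const']; exact ih (by omega)

/- ### derivative of the main function -/

lemma main_hasDeriv {a : ℝ} {w : ℝ} (hw : 2 < w) :
    HasDerivAt (fun w : ℝ => vOf w ^ a + vOf w ^ (-a))
      (a * (vOf w ^ a - vOf w ^ (-a)) / Real.sqrt (w ^ 2 - 4)) w := by
  have hspos : 0 < Real.sqrt (w ^ 2 - 4) := vOf_sqrt_pos hw
  have h2 : HasDerivAt (fun w : ℝ => w ^ 2 - 4) (2 * w) w := by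
    simpa using (hasDerivAt_pow 2 w).sub_const 4
  have h1 : HasDerivAt (fun w : ℝ => Real.sqrt (w ^ 2 - 4))
      (1 / (2 * Real.sqrt (w ^ 2 - 4)) * (2 * w)) w :=
    (Real.hasDerivAt_sqrt (vOf_sq_pos hw).ne').comp w h2
  have hv : HasDerivAt vOf
      ((1 + 1 / (2 * Real.sqrt (w ^ 2 - 4)) * (2 * w)) / 2) w := by
    have := ((hasDerivAt_id w).add h1).div_const 2
    exact this
  have hvval : (1 + 1 / (2 * Real.sqrt (w ^ 2 - 4)) * (2 * w)) / 2
      = vOf w / Real.sqrt (w ^ 2 - 4) := by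
    rw [vOf]
    field_simp
    ring
  rw [hvval] at hv
  have hv0 : vOf w ≠ 0 := (vOf_pos hw).ne'
  have ha' := hv.rpow_const (p := a) (Or.inl hv0)
  have hb' := hv.rpow_const (p := -a) (Or.inl hv0)
  have hsum := ha'.add hb'
  refine hsum.congr_deriv ?_
  rw [Real.rpow_sub_one hv0, Real.rpow_sub_one hv0]
  field_simp
  ring

lemma main_deriv_eq {a : ℝ} (ha0 : 0 < a) (ha1 : a < 1) {w : ℝ} (hw : 2 < w) :
    deriv (fun w : ℝ => vOf w ^ a + vOf w ^ (-a)) w = (a ^ 2 / CaB a) * KkB a 0 w := by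
  rw [(main_hasDeriv hw).deriv, K0_eq ha0 ha1 hw]
  have hC : 0 < CaB a := CaB_pos ha0 ha1
  have hspos : 0 < Real.sqrt (w ^ 2 - 4) := vOf_sqrt_pos hw
  field_simp

/- ### iterated derivatives -/

lemma main_iteratedDeriv {a : ℝ} (ha0 : 0 < a) (ha1 : a < 1) (n : ℕ) :
    ∀ w ∈ Ioi (2:ℝ), iteratedDeriv (n + 1) (fun w : ℝ => vOf w ^ a + vOf w ^ (-a)) w
      = ((a ^ 2 / CaB a) * ((-1) ^ n * (n.factorial : ℝ))) * KkB a n w := by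
  induction n with
  | zero =>
    intro w hw
    rw [iteratedDeriv_one, main_deriv_eq ha0 ha1 hw]
    norm_num
  | succ n ih =>
    intro w hw
    have hw2 : (2:ℝ) < w := hw
    rw [iteratedDeriv_succ]
    have heq : iteratedDeriv (n + 1) (fun w : ℝ => vOf w ^ a + vOf w ^ (-a))
        =ᶠ[nhds w] fun τ => ((a ^ 2 / CaB a) * ((-1) ^ n * (n.factorial : ℝ))) * KkB a n τ := by
      filter_upwards [isOpen_Ioi.mem_nhds hw] with τ hτ using ih τ hτ
    rw [heq.deriv_eq]
    have hK := (KkB_hasDeriv ha0 ha1 n hw2).const_mul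
      ((a ^ 2 / CaB a) * ((-1 : ℝ) ^ n * (n.factorial : ℝ)))
    rw [hK.deriv]
    rw [Nat.factorial_succ]
    push_cast
    ring

/- ### smoothness -/

lemma main_contDiffOn {a : ℝ} :
    ContDiffOn ℝ (⊤ : ℕ∞) (fun w : ℝ => vOf w ^ a + vOf w ^ (-a)) (Set.Ioi 2) := by
  intro w hw
  have hw2 : (2:ℝ) < w := hw
  apply ContDiffAt.contDiffWithinAt
  have hsq : ContDiffAt ℝ (⊤ : ℕ∞) (fun w : ℝ => w ^ 2 - 4) w :=
    ((contDiff_id.pow 2).sub contDiff_const).contDiffAt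
  have hr : ContDiffAt ℝ (⊤ : ℕ∞) (fun w : ℝ => Real.sqrt (w ^ 2 - 4)) w :=
    hsq.sqrt (vOf_sq_pos hw2).ne'
  have hv : ContDiffAt ℝ (⊤ : ℕ∞) vOf w := by
    have : ContDiffAt ℝ (⊤ : ℕ∞) (fun w : ℝ => (w + Real.sqrt (w ^ 2 - 4)) / 2) w :=
      (contDiffAt_id.add hr).div_const 2
    exact this
  exact (hv.rpow_const_of_ne (vOf_pos hw2).ne').add
    (hv.rpow_const_of_ne (vOf_pos hw2).ne')

/- ### main theorem -/

theorem stmt_11 (a : ℝ) (ha : a ∈ Set.Icc (0:ℝ) 1) :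
    (∀ w : ℝ, 2 < w → 0 ≤ vOf w ^ a + vOf w ^ (-a)) ∧
    ContDiffOn ℝ (⊤ : ℕ∞) (fun w : ℝ => vOf w ^ a + vOf w ^ (-a)) (Set.Ioi 2) ∧
    ∀ n : ℕ, 1 ≤ n → ∀ w : ℝ, 2 < w →
      0 ≤ (-1 : ℝ) ^ (n - 1)
          * iteratedDeriv n (fun w : ℝ => vOf w ^ a + vOf w ^ (-a)) w := by
  obtain ⟨ha0, ha1⟩ := ha
  refine ⟨?_, main_contDiffOn, ?_⟩
  · intro w hw
    have h1 : (0:ℝ) ≤ vOf w ^ a := Real.rpow_nonneg (vOf_pos hw).le a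
    have h2 : (0:ℝ) ≤ vOf w ^ (-a) := Real.rpow_nonneg (vOf_pos hw).le (-a)
    linarith
  · intro n hn w hw
    obtain ⟨m, rfl⟩ : ∃ m, n = m + 1 := ⟨n - 1, by omega⟩
    have hm1 : m + 1 - 1 = m := by omega
    rw [hm1]
    rcases eq_or_lt_of_le ha0 with h0 | h0
    · -- a = 0
      have hfun : (fun w : ℝ => vOf w ^ a + vOf w ^ (-a)) = fun _ : ℝ => (2:ℝ) := by
        funext τ
        rw [← h0, neg_zero, Real.rpow_zero]
        norm_num
      rw [hfun, iteratedDeriv_const_zero' (by omega) 2 w, mul_zero]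
    rcases eq_or_lt_of_le ha1 with h1 | h1
    · -- a = 1
      have hev : (fun τ : ℝ => vOf τ ^ a + vOf τ ^ (-a)) =ᶠ[nhds w] fun τ => τ := by
        filter_upwards [isOpen_Ioi.mem_nhds hw] with τ hτ
        have hτ2 : (2:ℝ) < τ := hτ
        rw [h1, Real.rpow_one, Real.rpow_neg_one, vOf_add_inv hτ2]
      rw [Filter.EventuallyEq.iteratedDeriv_eq (m + 1) hev]
      rcases Nat.eq_zero_or_pos m with hm | hm
      · subst hm
        rw [iteratedDeriv_one]
        have : deriv (fun τ : ℝ => τ) w = 1 := by simp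
        rw [this]
        norm_num
      · obtain ⟨k, rfl⟩ : ∃ k, m = k + 1 := ⟨m - 1, by omega⟩
        rw [iteratedDeriv_succ', show deriv (fun τ : ℝ => τ) = fun _ : ℝ => (1:ℝ) by
          funext τ; simp]
        rw [iteratedDeriv_const_zero' (by omega) 1 w, mul_zero]
    · -- 0 < a < 1
      rw [main_iteratedDeriv h0 h1 m w hw]
      have hone : (-1:ℝ) ^ m * (-1:ℝ) ^ m = 1 := by
        rw [← pow_add, ← two_mul, pow_mul]
        norm_num
      have e : (-1:ℝ) ^ m * ((a ^ 2 / CaB a) * ((-1) ^ m * (m.factorial : ℝ)) * KkB a m w)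
          = ((-1:ℝ) ^ m * (-1:ℝ) ^ m) * ((a ^ 2 / CaB a) * (m.factorial : ℝ) * KkB a m w) := by
        ring
      rw [e, hone, one_mul]
      have hC : 0 < CaB a := CaB_pos h0 h1
      exact mul_nonneg (mul_nonneg (by positivity) (by positivity)) (KkB_nonneg m hw)
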